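/- Let 1 ≤ p < ∞, 0 < q < p, r = pq/(p−q), let v, w be weights on (a,b), and let ε > 0. Then there is a constant c, depending only on q, r and ε, such that for every t ∈ (a,b): V(t)^{−ε} (∫_a^t V^{q(ε+1)} w)^{1/q} ≤ c · B₁,ε. In particular, B₁,ε < ∞ implies A_ε < ∞, and moreover lim_{s→a⁺} V(s)^{−ε} (∫_a^s V^{q(ε+1)} w)^{1/q} = 0 whenever B₁,ε < ∞. -/

import Mathlib

open MeasureTheory Set Filter
open scoped ENNReal Topology

/-- The open subinterval of `ℝ` with extended-real endpoints `a` and `b`. -/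
def EIoo (a b : EReal) : Set ℝ := {x : ℝ | a < (x : EReal) ∧ (x : EReal) < b}

/-- A weight on `(a,b)`: a measurable function which is positive and finite a.e. on `(a,b)`. -/
def IsWeight (a b : EReal) (v : ℝ → ℝ≥0∞) : Prop :=
  Measurable v ∧ ∀ᵐ x ∂(volume.restrict (EIoo a b)), v x ≠ 0 ∧ v x ≠ ∞

/-- The function `V` in the case `1 < p`:  `V(t) = (∫_a^t v^{1-p'})^{1/p'}`, `p' = p/(p-1)`. -/
noncomputable def Vp (a : EReal) (p : ℝ) (v : ℝ → ℝ≥0∞) (t : ℝ) : ℝ≥0∞ :=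
  (∫⁻ s in EIoo a (t : EReal), v s ^ (1 - p / (p - 1))) ^ ((p - 1) / p)

/-- The function `V` in the case `p = 1`:  `V(t) = ess sup_{s ∈ (a,t)} 1/v(s)`. -/
noncomputable def V1 (a : EReal) (v : ℝ → ℝ≥0∞) (t : ℝ) : ℝ≥0∞ :=
  essSup (fun s => (v s)⁻¹) (volume.restrict (EIoo a (t : EReal)))

/-- `A_ε = sup_{t ∈ (a,b)} V(t)^{-ε} (∫_a^t V^{q(ε+1)} w)^{1/q}`. -/
noncomputable def Aeps (a b : EReal) (q ε : ℝ) (V w : ℝ → ℝ≥0∞) : ℝ≥0∞ :=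
  ⨆ t ∈ EIoo a b,
    V t ^ (-ε) * (∫⁻ s in EIoo a (t : EReal), V s ^ (q * (ε + 1)) * w s) ^ (1 / q)

/-- `B_{1,ε} = (∫_a^b (∫_a^t V^{q(ε+1)} w)^{r/p} V(t)^{q(ε+1)-εr} w(t) dt)^{1/r}`. -/
noncomputable def B1 (a b : EReal) (p q r ε : ℝ) (V w : ℝ → ℝ≥0∞) : ℝ≥0∞ :=
  (∫⁻ t in EIoo a b,
      (∫⁻ s in EIoo a (t : EReal), V s ^ (q * (ε + 1)) * w s) ^ (r / p) *
        (V t ^ (q * (ε + 1) - ε * r) * w t)) ^ (1 / r)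

/-- The weighted Hardy inequality with constant `C`, case `p > 1`
(`RHS = C (∫_a^b f^p v)^{1/p}`). -/
def HardyP (a b : EReal) (p q : ℝ) (v w : ℝ → ℝ≥0∞) (C : ℝ≥0∞) : Prop :=
  ∀ f : ℝ → ℝ≥0∞, Measurable f →
    (∫⁻ t in EIoo a b, (∫⁻ s in EIoo a (t : EReal), f s) ^ q * w t) ^ (1 / q)
      ≤ C * (∫⁻ x in EIoo a b, f x ^ p * v x) ^ (1 / p)

/-- The weighted Hardy inequality with constant `C`, case `p = 1`
(`RHS = C ∫_a^b f v`). -/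
def Hardy1 (a b : EReal) (q : ℝ) (v w : ℝ → ℝ≥0∞) (C : ℝ≥0∞) : Prop :=
  ∀ f : ℝ → ℝ≥0∞, Measurable f →
    (∫⁻ t in EIoo a b, (∫⁻ s in EIoo a (t : EReal), f s) ^ q * w t) ^ (1 / q)
      ≤ C * ∫⁻ x in EIoo a b, f x * v x

/-- `A_ε < ∞`, including the requirement that every subexpression (in particular
`V(t)` and the inner integral) is finite for every `t ∈ (a,b)`. -/
def AFin (a b : EReal) (q ε : ℝ) (V w : ℝ → ℝ≥0∞) : Prop :=
  (∀ t ∈ EIoo a b,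
      V t ≠ ∞ ∧ (∫⁻ s in EIoo a (t : EReal), V s ^ (q * (ε + 1)) * w s) ≠ ∞) ∧
    Aeps a b q ε V w ≠ ∞

/-- `B_{1,ε} < ∞`, including the requirement that every subexpression (in particular
`V(t)` and the inner integral) is finite for every `t ∈ (a,b)`. -/
def B1Fin (a b : EReal) (p q r ε : ℝ) (V w : ℝ → ℝ≥0∞) : Prop :=
  (∀ t ∈ EIoo a b,
      V t ≠ ∞ ∧ (∫⁻ s in EIoo a (t : EReal), V s ^ (q * (ε + 1)) * w s) ≠ ∞) ∧
    B1 a b p q r ε V w ≠ ∞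

/-! For an atomless measure `μ` on `ℝ` one has `μ(ℝ)^{α+1} ≤ 2^{α+1} ∫ μ(-∞,s)^α dμ(s)`: the
points `s` with `μ(-∞,s) ≥ μ(ℝ)/2` carry at least half of the mass. Applied on `(a,t)` to
`dμ = V^{q(ε+1)} w` with `α = r/p` (so that `α + 1 = r/q`), and combined with
`V(t)^{-εr} V(s)^{q(ε+1)} ≤ V(s)^{q(ε+1)-εr}` for `s < t` (`V` is nondecreasing), this bounds
`V(t)^{-ε} (∫_a^t V^{q(ε+1)} w)^{1/q}` by `2^{1/q}` times the `r`-th root of the integral defining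
`B₁,ε`, taken over `(a,t)` only. That integral tends to `0` as `t → a⁺` when `B₁,ε < ∞`. -/

lemma ENNReal.rpow_neg_mul_rpow_le_rpow_sub {x y : ℝ≥0∞} (hxy : x ≤ y) {c d : ℝ} (hc : 0 ≤ c)
    (hd : 0 < d) : y ^ (-c) * x ^ d ≤ x ^ (d - c) := by
  rcases eq_or_ne x 0 with rfl | hx0
  · simp [ENNReal.zero_rpow_of_pos hd]
  rcases eq_or_ne x ⊤ with rfl | hxtop
  · rcases hc.eq_or_lt with rfl | hc
    · simp
    · simp [top_le_iff.mp hxy, ENNReal.top_rpow_of_neg (neg_neg_of_pos hc)]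
  have hneg : y ^ (-c) ≤ x ^ (-c) := by
    rw [ENNReal.rpow_neg, ENNReal.rpow_neg]
    exact ENNReal.inv_le_inv.mpr (ENNReal.rpow_le_rpow hxy hc)
  calc y ^ (-c) * x ^ d ≤ x ^ (-c) * x ^ d := mul_le_mul_of_nonneg_right hneg zero_le
    _ = x ^ (d - c) := by rw [← ENNReal.rpow_add _ _ hx0 hxtop, neg_add_eq_sub]

lemma measure_setOf_measure_Iio_lt_le (μ : Measure ℝ) [NullSingletonClass μ] (β : ℝ≥0∞) :
    μ {s | μ (Iio s) < β} ≤ β := by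
  set C := {s | μ (Iio s) < β}
  have hC : ∀ ⦃x y⦄, x ≤ y → y ∈ C → x ∈ C := fun x y hxy hy =>
    (measure_mono (Iio_subset_Iio hxy)).trans_lt hy
  set T := {s ∈ C | ∀ x ∈ C, x ≤ s}
  -- `C` is a down-set, so apart from its largest element it is covered by countably many `Iio q`.
  have hcover : C ⊆ (⋃ q : {q : ℚ // (q : ℝ) ∈ C}, Iio (q : ℝ)) ∪ T := by
    intro s hs
    by_cases hmax : ∀ x ∈ C, x ≤ s
    · exact Or.inr ⟨hs, hmax⟩
    simp only [not_forall, not_le] at hmax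
    obtain ⟨x, hx, hsx⟩ := hmax
    obtain ⟨q, hsq, hqx⟩ := exists_rat_btwn hsx
    exact Or.inl (mem_iUnion.mpr ⟨⟨q, hC hqx.le hx⟩, hsq⟩)
  have hT : μ T = 0 :=
    Set.Subsingleton.measure_zero (fun x hx y hy => le_antisymm (hy.2 x hx.1) (hx.2 y hy.1)) μ
  have hU : μ (⋃ q : {q : ℚ // (q : ℝ) ∈ C}, Iio (q : ℝ)) ≤ β := by
    rw [Monotone.measure_iUnion fun q q' h => Iio_subset_Iio (by exact_mod_cast h)]
    exact iSup_le fun q => q.2.le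
  calc μ C ≤ μ ((⋃ q : {q : ℚ // (q : ℝ) ∈ C}, Iio (q : ℝ)) ∪ T) := measure_mono hcover
    _ ≤ μ (⋃ q : {q : ℚ // (q : ℝ) ∈ C}, Iio (q : ℝ)) + μ T := measure_union_le _ _
    _ ≤ β := by rw [hT, add_zero]; exact hU

lemma measure_univ_rpow_le_lintegral (μ : Measure ℝ) [NullSingletonClass μ] {α : ℝ}
    (hα : 0 < α) : μ univ ^ (α + 1) ≤ 2 ^ (α + 1) * ∫⁻ s, μ (Iio s) ^ α ∂μ := by
  have hF : Measurable fun s => μ (Iio s) ^ α :=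
    (Monotone.measurable fun _ _ h => measure_mono (Iio_subset_Iio h)).pow_const α
  have hlevel : ∀ β, β ^ α * (μ univ - β) ≤ ∫⁻ s, μ (Iio s) ^ α ∂μ := by
    intro β
    have hsplit : μ univ ≤ μ {s | β ≤ μ (Iio s)} + β := calc
      μ univ ≤ μ ({s | β ≤ μ (Iio s)} ∪ {s | μ (Iio s) < β}) :=
          measure_mono fun s _ => le_or_gt β (μ (Iio s))
      _ ≤ μ {s | β ≤ μ (Iio s)} + β :=
          (measure_union_le _ _).trans (add_le_add le_rfl (measure_setOf_measure_Iio_lt_le μ β))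
    calc β ^ α * (μ univ - β) ≤ β ^ α * μ {s | β ^ α ≤ μ (Iio s) ^ α} := by
          gcongr
          exact (tsub_le_iff_right.mpr hsplit).trans
            (measure_mono fun s hs => ENNReal.rpow_le_rpow hs hα.le)
      _ ≤ ∫⁻ s, μ (Iio s) ^ α ∂μ := mul_meas_ge_le_lintegral₀ hF.aemeasurable _
  rcases eq_or_ne (μ univ) ⊤ with htop | htop
  · have h := hlevel 1
    rw [htop, ENNReal.top_sub ENNReal.one_ne_top, ENNReal.one_rpow, one_mul, top_le_iff] at h
    rw [h, ENNReal.mul_top (by positivity)]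
    exact le_top
  · calc μ univ ^ (α + 1) = (2 * (μ univ / 2)) ^ (α + 1) := by
          rw [ENNReal.mul_div_cancel two_ne_zero ENNReal.ofNat_ne_top]
      _ = 2 ^ (α + 1) * ((μ univ / 2) ^ α * (μ univ - μ univ / 2)) := by
          rw [ENNReal.mul_rpow_of_nonneg _ _ (by positivity),
            ENNReal.rpow_add_of_nonneg (x := μ univ / 2) _ _ hα.le zero_le_one, ENNReal.rpow_one,
            ENNReal.sub_half htop]
      _ ≤ 2 ^ (α + 1) * ∫⁻ s, μ (Iio s) ^ α ∂μ := by gcongr; exact hlevel _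

lemma measurableSet_EIoo (a b : EReal) : MeasurableSet (EIoo a b) :=
  continuous_coe_real_ereal.measurable measurableSet_Ioo

lemma EIoo_mono {a c d : EReal} (h : c ≤ d) : EIoo a c ⊆ EIoo a d :=
  fun _ hx => ⟨hx.1, hx.2.trans_le h⟩

lemma Iio_inter_EIoo {a e : EReal} {s : ℝ} (hs : (s : EReal) ≤ e) :
    Iio s ∩ EIoo a e = EIoo a s := by
  ext x
  simp only [EIoo, mem_inter_iff, mem_Iio, mem_ofPred_eq, EReal.coe_lt_coe_iff]
  exact ⟨fun h => ⟨h.2.1, h.1⟩, fun h => ⟨h.2, h.1, (EReal.coe_lt_coe_iff.mpr h.2).trans_le hs⟩⟩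

lemma lintegral_EIoo_rpow_le (a : EReal) (t : ℝ) {G : ℝ → ℝ≥0∞} (hG : Measurable G) {α : ℝ}
    (hα : 0 < α) :
    (∫⁻ s in EIoo a t, G s) ^ (α + 1) ≤
      2 ^ (α + 1) * ∫⁻ s in EIoo a t, (∫⁻ y in EIoo a s, G y) ^ α * G s := by
  set μ := (volume.restrict (EIoo a t)).withDensity G
  have hμ : ∀ s : ℝ, (s : EReal) ≤ t → μ (Iio s) = ∫⁻ y in EIoo a s, G y := fun s hs => by
    rw [withDensity_apply _ measurableSet_Iio, Measure.restrict_restrict measurableSet_Iio,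
      Iio_inter_EIoo hs]
  have hF : Measurable fun s => μ (Iio s) ^ α :=
    (Monotone.measurable fun _ _ h => measure_mono (Iio_subset_Iio h)).pow_const α
  calc (∫⁻ s in EIoo a t, G s) ^ (α + 1) = μ univ ^ (α + 1) := by
        rw [withDensity_apply _ MeasurableSet.univ, Measure.restrict_univ]
    _ ≤ 2 ^ (α + 1) * ∫⁻ s, μ (Iio s) ^ α ∂μ := measure_univ_rpow_le_lintegral μ hα
    _ = 2 ^ (α + 1) * ∫⁻ s in EIoo a t, (∫⁻ y in EIoo a s, G y) ^ α * G s := by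
        rw [lintegral_withDensity_eq_lintegral_mul _ hG hF]
        congr 1
        refine setLIntegral_congr_fun (measurableSet_EIoo a t) fun s hs => ?_
        rw [Pi.mul_apply, hμ s hs.2.le, mul_comm]

lemma tendsto_setLIntegral_EIoo_nhdsGT {a b : EReal} (hab : a < b) {f : ℝ → ℝ≥0∞}
    (hf : ∫⁻ x in EIoo a b, f x ≠ ∞) :
    Tendsto (fun e : EReal => ∫⁻ x in EIoo a e, f x) (𝓝[>] a) (𝓝 0) := by
  have h := tendsto_measure_biInter_gt (μ := volume.withDensity f) (s := EIoo a) (a := a)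
    (fun e _ => (measurableSet_EIoo a e).nullMeasurableSet) (fun _ _ _ hij => EIoo_mono hij)
    ⟨b, hab, by rwa [withDensity_apply _ (measurableSet_EIoo a b)]⟩
  have hempty : ⋂ e > a, EIoo a e = ∅ :=
    eq_empty_of_forall_notMem fun x hx =>
      lt_irrefl _ (mem_iInter₂.mp hx x (mem_iInter₂.mp hx b hab).1).2
  rw [hempty, measure_empty] at h
  exact h.congr fun e => withDensity_apply _ (measurableSet_EIoo a e)

lemma rpow_neg_mul_lintegral_rpow_le (a : EReal) {q r ε α : ℝ} (hq : 0 < q) (hr : 0 < r)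
    (hε : 0 ≤ ε) (hα : 0 < α) (hrq : r / q = α + 1) {V w : ℝ → ℝ≥0∞} (hV : Monotone V)
    (hw : Measurable w) (t : ℝ) :
    V t ^ (-ε) * (∫⁻ s in EIoo a t, V s ^ (q * (ε + 1)) * w s) ^ (1 / q) ≤
      2 ^ (1 / q) * (∫⁻ s in EIoo a t, (∫⁻ y in EIoo a s, V y ^ (q * (ε + 1)) * w y) ^ α *
        (V s ^ (q * (ε + 1) - ε * r) * w s)) ^ (1 / r) := by
  set G := fun s => V s ^ (q * (ε + 1)) * w s
  set F := fun s : ℝ => ∫⁻ y in EIoo a s, G y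
  have hG : Measurable G := (hV.measurable.pow_const _).mul hw
  have hF : Monotone F := fun _ _ h => lintegral_mono_set (EIoo_mono (EReal.coe_le_coe_iff.mpr h))
  have hpt : ∀ s ∈ EIoo a t, V t ^ (-(ε * r)) * (F s ^ α * G s) ≤
      F s ^ α * (V s ^ (q * (ε + 1) - ε * r) * w s) := fun s hs => calc
    _ = F s ^ α * (V t ^ (-(ε * r)) * V s ^ (q * (ε + 1)) * w s) := by ring
    _ ≤ F s ^ α * (V s ^ (q * (ε + 1) - ε * r) * w s) := by
      gcongr
      exact ENNReal.rpow_neg_mul_rpow_le_rpow_sub (hV (EReal.coe_lt_coe_iff.mp hs.2).le)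
        (by positivity) (by positivity)
  set I := ∫⁻ s in EIoo a t, F s ^ α * (V s ^ (q * (ε + 1) - ε * r) * w s)
  have hmain : V t ^ (-(ε * r)) * F t ^ (r / q) ≤ 2 ^ (r / q) * I := calc
    _ ≤ V t ^ (-(ε * r)) * (2 ^ (r / q) * ∫⁻ s in EIoo a t, F s ^ α * G s) := by
      rw [hrq]; gcongr; exact lintegral_EIoo_rpow_le a t hG hα
    _ ≤ 2 ^ (r / q) * ∫⁻ s in EIoo a t, V t ^ (-(ε * r)) * (F s ^ α * G s) := by
      rw [mul_left_comm]; gcongr; exact lintegral_const_mul_le _ _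
    _ ≤ 2 ^ (r / q) * I := by
      gcongr 2 ^ (r / q) * ?_
      exact setLIntegral_mono ((hF.measurable.pow_const _).mul
        ((hV.measurable.pow_const _).mul hw)) hpt
  calc V t ^ (-ε) * F t ^ (1 / q) = (V t ^ (-(ε * r)) * F t ^ (r / q)) ^ (1 / r) := by
        rw [ENNReal.mul_rpow_of_nonneg _ _ (by positivity), ← ENNReal.rpow_mul,
          ← ENNReal.rpow_mul]
        congr 2 <;> field_simp
    _ ≤ (2 ^ (r / q) * I) ^ (1 / r) := by gcongr
    _ = 2 ^ (1 / q) * I ^ (1 / r) := by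
        rw [ENNReal.mul_rpow_of_nonneg _ _ (by positivity), ← ENNReal.rpow_mul]
        congr 2
        field_simp

lemma monotone_Vp (a : EReal) {p : ℝ} (hp : 1 ≤ p) (v : ℝ → ℝ≥0∞) : Monotone (Vp a p v) :=
  fun _ _ h => ENNReal.rpow_le_rpow (lintegral_mono_set (EIoo_mono (EReal.coe_le_coe_iff.mpr h)))
    (div_nonneg (by linarith) (by linarith))

lemma monotone_V1 (a : EReal) (v : ℝ → ℝ≥0∞) : Monotone (V1 a v) :=
  fun _ _ h => essSup_mono_measure (Measure.absolutelyContinuous_of_le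
    (Measure.restrict_mono (EIoo_mono (EReal.coe_le_coe_iff.mpr h)) le_rfl))

/-- for `1 ≤ p < ∞`, `0 < q < p`, `r = pq/(p-q)` there is a constant `c`
depending only on `q, r, ε` with `V(t)^{-ε} (∫_a^t V^{q(ε+1)} w)^{1/q} ≤ c·B_{1,ε}` for
all `t ∈ (a,b)`; in particular `B_{1,ε} < ∞` implies `A_ε < ∞`, and moreover the
expression tends to `0` as `s → a⁺` whenever `B_{1,ε} < ∞`. -/
theorem stmt15 (p q r ε : ℝ) (hp : 1 ≤ p) (hq : 0 < q) (hqp : q < p)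
    (hr : r = p * q / (p - q)) (hε : 0 < ε) :
    ∃ c : ℝ≥0∞, 0 < c ∧ c ≠ ∞ ∧
      ∀ (a b : EReal), a < b →
        ∀ v w : ℝ → ℝ≥0∞, IsWeight a b v → IsWeight a b w →
          ∀ V : ℝ → ℝ≥0∞, ((1 < p ∧ V = Vp a p v) ∨ (p = 1 ∧ V = V1 a v)) →
            (∀ t ∈ EIoo a b,
                V t ^ (-ε) *
                    (∫⁻ s in EIoo a (t : EReal), V s ^ (q * (ε + 1)) * w s) ^ (1 / q)
                  ≤ c * B1 a b p q r ε V w) ∧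
              (B1 a b p q r ε V w ≠ ∞ → Aeps a b q ε V w ≠ ∞) ∧
              (B1 a b p q r ε V w ≠ ∞ →
                Tendsto
                  (fun s : ℝ =>
                    V s ^ (-ε) *
                      (∫⁻ y in EIoo a (s : EReal), V y ^ (q * (ε + 1)) * w y) ^ (1 / q))
                  (comap (fun x : ℝ => (x : EReal)) (𝓝[Set.Ioi a] a)) (𝓝 0)) := by
  have hpq : 0 < p - q := by linarith
  have hr0 : 0 < r := by rw [hr]; exact div_pos (by nlinarith) hpq
  have hrq : r / q = r / p + 1 := by rw [hr]; field_simp; ring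
  have hc : (2 : ℝ≥0∞) ^ (1 / q) ≠ ∞ := ENNReal.rpow_ne_top_of_nonneg (by positivity) (by simp)
  refine ⟨2 ^ (1 / q), ENNReal.rpow_pos (by norm_num) (by simp), hc, ?_⟩
  intro a b hab v w _ hw V hV
  have hVmono : Monotone V := by
    rcases hV with ⟨-, rfl⟩ | ⟨-, rfl⟩
    exacts [monotone_Vp a hp v, monotone_V1 a v]
  have hbound := rpow_neg_mul_lintegral_rpow_le a hq hr0 hε.le (by positivity) hrq hVmono hw.1
  have hle : ∀ t ∈ EIoo a b, V t ^ (-ε) *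
      (∫⁻ s in EIoo a t, V s ^ (q * (ε + 1)) * w s) ^ (1 / q) ≤ 2 ^ (1 / q) * B1 a b p q r ε V w :=
    fun t ht => (hbound t).trans (by unfold B1; gcongr; exact EIoo_mono ht.2.le)
  refine ⟨hle, fun hB => ne_top_of_le_ne_top (ENNReal.mul_ne_top hc hB) (iSup₂_le hle),
    fun hB => ?_⟩
  have hint : ∫⁻ t in EIoo a b, (∫⁻ s in EIoo a t, V s ^ (q * (ε + 1)) * w s) ^ (r / p) *
      (V t ^ (q * (ε + 1) - ε * r) * w t) ≠ ∞ :=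
    fun h => hB (by rw [B1, h, ENNReal.top_rpow_of_pos (by positivity)])
  have hlim := ENNReal.Tendsto.const_mul
    (((ENNReal.continuous_rpow_const (y := 1 / r)).tendsto 0).comp
      (tendsto_setLIntegral_EIoo_nhdsGT hab hint)) (Or.inr hc)
  rw [ENNReal.zero_rpow_of_pos (by positivity), mul_zero] at hlim
  exact tendsto_of_tendsto_of_tendsto_of_le_of_le tendsto_const_nhds (hlim.comp tendsto_comap)
    (fun _ => zero_le) hbound
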